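/- arXiv:0906.0992 — 2 statements merged into one kernel-verified Lean document; each statement's English description precedes it below -/
import Mathlib

section
/- If β > 0 satisfies β λ'(β) − λ(β) > 2 (log b)/(s − 1), then strong disorder holds at β, i.e. W_∞(β) = 0 Q-almost surely. -/
open MeasureTheory ProbabilityTheory Real Filter Topology

namespace DiamondPolymer

/-- Addresses of the interior vertices of the diamond hierarchical lattices: a vertex of
generation `k` is addressed by a list of `k - 1` (branch, segment) choices together with a final
(branch, junction) choice. -/
abbrev GIdx (b s : ℕ) : Type := List (Fin b × Fin s) × (Fin b × Fin (s - 1))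

/-- Directed paths from `A` to `B` in `D n`: a path in `D (n+1)` chooses a branch of the
coarsest diamond and, for each of its `s` segments, a path in the corresponding copy of `D n`. -/
def PPath (b s : ℕ) : ℕ → Type
  | 0 => PUnit
  | n + 1 => Fin b × (Fin s → PPath b s n)

def PPathFintype (b s : ℕ) : ∀ n, Fintype (PPath b s n)
  | 0 => inferInstanceAs (Fintype PUnit)
  | n + 1 => letI := PPathFintype b s n
      inferInstanceAs (Fintype (Fin b × (Fin s → PPath b s n)))

instance (b s n : ℕ) : Fintype (PPath b s n) := PPathFintype b s n

def PPathDecEq (b s : ℕ) : ∀ n, DecidableEq (PPath b s n)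
  | 0 => inferInstanceAs (DecidableEq PUnit)
  | n + 1 => letI := PPathDecEq b s n
      inferInstanceAs (DecidableEq (Fin b × (Fin s → PPath b s n)))

instance (b s n : ℕ) : DecidableEq (PPath b s n) := PPathDecEq b s n

/-- The sum of the environment over the interior vertices visited by a path, where `pre` is the
address prefix of the copy of `D n` the path lives in. -/
def ham (b s : ℕ) (ω : GIdx b s → ℝ) : ∀ n, PPath b s n → List (Fin b × Fin s) → ℝ
  | 0, _, _ => 0
  | n + 1, g, pre =>
      let g' : Fin b × (Fin s → PPath b s n) := g
      (∑ j : Fin (s - 1), ω (pre, (g'.1, j))) +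
        ∑ j : Fin s, ham b s ω n (g'.2 j) (pre ++ [(g'.1, j)])

/-- The Hamiltonian `H_n(g) = ∑_{t=1}^{s^n - 1} ω(g_t)`. -/
def H (b s : ℕ) (ω : GIdx b s → ℝ) (n : ℕ) (g : PPath b s n) : ℝ := ham b s ω n g List.nil

/-- The partition function `Z_n(β) = ∑_{g ∈ Γ_n} exp (β H_n(g))`. -/
noncomputable def Z (b s : ℕ) (β : ℝ) (n : ℕ) (ω : GIdx b s → ℝ) : ℝ :=
  ∑ g : PPath b s n, Real.exp (β * H b s ω n g)

/-- The partition function as a random variable on the environment space. -/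
noncomputable def Zrv {b s : ℕ} {Ω : Type*} (ω : GIdx b s → Ω → ℝ) (β : ℝ) (n : ℕ) (x : Ω) : ℝ :=
  Z b s β n fun z => ω z x

/-- The normalized partition function `W_n(β) = Z_n(β) / Q[Z_n(β)]`. -/
noncomputable def Wrv {b s : ℕ} {Ω : Type*} [MeasurableSpace Ω] (Q : Measure Ω)
    (ω : GIdx b s → Ω → ℝ) (β : ℝ) (n : ℕ) (x : Ω) : ℝ :=
  Zrv ω β n x / ∫ y, Zrv ω β n y ∂Q

/-- The cumulant generating function `λ(β) = log Q[exp (β ω_0)]` of the marginal `μ`. -/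
noncomputable def lam (μ : Measure ℝ) (β : ℝ) : ℝ := Real.log (∫ x, Real.exp (β * x) ∂μ)

/-- The annealed free energy `f(β) = λ(β) + log b / (s - 1)`. -/
noncomputable def fann (b s : ℕ) (μ : Measure ℝ) (β : ℝ) : ℝ :=
  lam μ β + Real.log b / ((s : ℝ) - 1)

/-- The σ-algebra `F_n` generated by the environment of the first `n` generations. -/
def Fσ {b s : ℕ} {Ω : Type*} [MeasurableSpace Ω] (ω : GIdx b s → Ω → ℝ) (n : ℕ) :
    MeasurableSpace Ω :=
  ⨆ z : {z : GIdx b s // z.1.length < n}, MeasurableSpace.comap (ω z.1) inferInstance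

/-- Restriction of a path in `D (n+1)` to `D n` (forgetting the finest generation). -/
def coarsen (b s : ℕ) : ∀ n, PPath b s (n + 1) → PPath b s n
  | 0, _ => PUnit.unit
  | n + 1, g =>
      let g' : Fin b × (Fin s → PPath b s (n + 1)) := g
      (g'.1, fun j => coarsen b s n (g'.2 j))

/-- Restriction `g ↦ g|_m` of a path in `D (m + k)` to `D m`. -/
def down (b s m : ℕ) : ∀ k, PPath b s (m + k) → PPath b s m
  | 0, g => g
  | k + 1, g => down b s m k (coarsen b s (m + k) g)

/-- `μ_{m+k} (γ|_m = g)`, the polymer measure of the set of paths restricting to `g`. -/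
noncomputable def muRestr (b s : ℕ) (β : ℝ) (m k : ℕ) (g : PPath b s m)
    (ω : GIdx b s → ℝ) : ℝ :=
  (∑ g' : PPath b s (m + k),
      if down b s m k g' = g then Real.exp (β * H b s ω (m + k) g') else 0) /
    Z b s β (m + k) ω

/-- The sequence `(v_n)` of variances of `W_n`, as a dynamical system: `v_0 = 0`,
`v_{n+1} = (1/b) (e^{(s-1)γ} (v_n + 1)^s - 1)` where `γ = γ(β) = λ(2β) - 2λ(β)`. -/
noncomputable def vseq (b s : ℕ) (γ : ℝ) : ℕ → ℝ
  | 0 => 0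
  | n + 1 => (1 / (b : ℝ)) * (Real.exp (((s : ℝ) - 1) * γ) * (vseq b s γ n + 1) ^ s - 1)

/-!
Fractional moment method. For `θ ∈ (0, 1)`, subadditivity of `u ↦ u ^ θ` gives
`Z_n(β) ^ θ ≤ Z_n(θ β)`. A path visits `s ^ n - 1` distinct vertices, carrying independent weights,
and there are `N_n = b ^ ((s ^ n - 1) / (s - 1))` paths, so
`Q[W_n ^ θ] ≤ exp ((s ^ n - 1) (f(θ β) - θ f(β)))`, where `f = fann` is the annealed free energy.
The function `θ ↦ f(θ β) - θ f(β)` vanishes at `θ = 1` with slope `β λ'(β) - f(β)`, which is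
positive by hypothesis; so the exponent is negative for some `θ < 1`. The fractional moments are
then summable, hence `W_n ^ θ → 0` almost surely, and `W_∞ = 0`.
-/

end DiamondPolymer

lemma Real.rpow_finsetSum_le_sum_rpow {ι : Type*} (t : Finset ι) {f : ι → ℝ}
    (hf : ∀ i ∈ t, 0 ≤ f i) {p : ℝ} (hp : 0 < p) (hp1 : p ≤ 1) :
    (∑ i ∈ t, f i) ^ p ≤ ∑ i ∈ t, f i ^ p := by
  classical
  induction t using Finset.induction_on with
  | empty => simp [Real.zero_rpow hp.ne']
  | insert i t hi ih =>
    rw [Finset.sum_insert hi, Finset.sum_insert hi]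
    have hft : ∀ j ∈ t, 0 ≤ f j := fun j hj => hf j (Finset.mem_insert_of_mem hj)
    calc (f i + ∑ j ∈ t, f j) ^ p ≤ f i ^ p + (∑ j ∈ t, f j) ^ p :=
          Real.rpow_add_le_add_rpow (hf i (Finset.mem_insert_self i t))
            (Finset.sum_nonneg hft) hp.le hp1
      _ ≤ f i ^ p + ∑ j ∈ t, f j ^ p := by gcongr; exact ih hft

lemma HasDerivAt.exists_lt_of_pos {f : ℝ → ℝ} {f' x a : ℝ} (hf : HasDerivAt f f' x)
    (hf' : 0 < f') (ha : a < x) : ∃ y ∈ Set.Ioo a x, f y < f x := by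
  have hslope : ∀ᶠ y in 𝓝[<] x, 0 < slope f x y :=
    ((hasDerivAt_iff_tendsto_slope.mp hf).mono_left (nhdsLT_le_nhdsNE x)).eventually
      (eventually_gt_nhds hf')
  obtain ⟨y, hy, hyax⟩ := (hslope.and (Ioo_mem_nhdsLT ha)).exists
  rw [slope_def_field] at hy
  refine ⟨y, hyax, ?_⟩
  rcases div_pos_iff.mp hy with ⟨-, hxy⟩ | ⟨hfy, -⟩ <;> linarith [hyax.2]

lemma Filter.Tendsto.of_rpow_nhds_zero {α : Type*} {l : Filter α} {u : α → ℝ}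
    (hu : ∀ n, 0 ≤ u n) {p : ℝ} (hp : 0 < p) (h : Tendsto (fun n => u n ^ p) l (𝓝 0)) :
    Tendsto u l (𝓝 0) := by
  have h' := ((continuous_rpow_const (inv_nonneg.mpr hp.le)).tendsto 0).comp h
  rw [zero_rpow (inv_ne_zero hp.ne')] at h'
  refine h'.congr fun n => ?_
  simp only [Function.comp_apply, ← rpow_mul (hu n), mul_inv_cancel₀ hp.ne', rpow_one]

lemma MeasureTheory.ae_tendsto_zero_of_summable_integral_norm {X E : Type*} [MeasurableSpace X]
    {μ : Measure X} [NormedAddCommGroup E] {f : ℕ → X → E} (hf : ∀ n, Integrable (f n) μ)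
    (hsum : Summable fun n => ∫ x, ‖f n x‖ ∂μ) :
    ∀ᵐ x ∂μ, Tendsto (fun n => f n x) atTop (𝓝 0) := by
  have hfin : ∑' n, eLpNorm (f n) 1 μ ≠ ⊤ := by
    simp only [eLpNorm_one_eq_lintegral_enorm, ← ofReal_integral_norm_eq_lintegral_enorm (hf _)]
    rw [← ENNReal.ofReal_tsum_of_nonneg (fun n => integral_nonneg fun _ => norm_nonneg _) hsum]
    exact ENNReal.ofReal_ne_top
  filter_upwards [summable_norm_of_tsum_eLpNorm_ne_top le_rfl (fun n => (hf n).1) hfin] with x hx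
  exact tendsto_zero_iff_norm_tendsto_zero.mpr hx.tendsto_atTop_zero

lemma Real.exp_mul_le_exp_pow {m n : ℕ} (hnm : n ≤ m) {c : ℝ} (hc : c ≤ 0) :
    exp (m * c) ≤ exp c ^ n := by
  rw [← exp_nat_mul, exp_le_exp]
  exact mul_le_mul_of_nonpos_right (by exact_mod_cast hnm) hc

lemma Nat.sub_one_add_pow_sub_one_mul {s : ℕ} (hs : 1 ≤ s) (n : ℕ) :
    s - 1 + (s ^ n - 1) * s = s ^ (n + 1) - 1 := by
  have h1 := Nat.one_le_pow n s hs
  have h2 := Nat.one_le_pow (n + 1) s hs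
  zify [hs, h1, h2]
  ring

namespace DiamondPolymer

def visited (b s : ℕ) : ∀ n, PPath b s n → List (Fin b × Fin s) → Finset (GIdx b s)
  | 0, _, _ => ∅
  | n + 1, g, pre =>
      let g' : Fin b × (Fin s → PPath b s n) := g
      (Finset.univ.image fun j : Fin (s - 1) => (pre, (g'.1, j))) ∪
        Finset.univ.biUnion fun j : Fin s => visited b s n (g'.2 j) (pre ++ [(g'.1, j)])

lemma prefix_of_mem_visited {b s : ℕ} : ∀ {n} {g : PPath b s n} {pre : List (Fin b × Fin s)}
    {z : GIdx b s}, z ∈ visited b s n g pre → pre <+: z.1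
  | 0, _, _, _, hz => by simp [visited] at hz
  | n + 1, g, pre, z, hz => by
    simp only [visited, Finset.mem_union, Finset.mem_image, Finset.mem_biUnion] at hz
    rcases hz with ⟨j, -, rfl⟩ | ⟨j, -, hj⟩
    · exact List.prefix_refl _
    · exact (pre.prefix_append _).trans (prefix_of_mem_visited hj)

lemma sum_visited_succ {M : Type*} [AddCommMonoid M] {b s : ℕ} (F : GIdx b s → M) (n : ℕ)
    (g : Fin b × (Fin s → PPath b s n)) (pre : List (Fin b × Fin s)) :
    ∑ z ∈ visited b s (n + 1) g pre, F z =
      (∑ j : Fin (s - 1), F (pre, (g.1, j))) +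
      ∑ j : Fin s, ∑ z ∈ visited b s n (g.2 j) (pre ++ [(g.1, j)]), F z := by
  have hjunction :
      Disjoint (Finset.univ.image fun j : Fin (s - 1) => ((pre, (g.1, j)) : GIdx b s))
      (Finset.univ.biUnion fun j : Fin s => visited b s n (g.2 j) (pre ++ [(g.1, j)])) := by
    simp only [Finset.disjoint_left, Finset.mem_image, Finset.mem_biUnion]
    rintro _ ⟨j, -, rfl⟩ ⟨j', -, hj'⟩
    simpa using (prefix_of_mem_visited hj').length_le
  have hsegments : ∀ j j' : Fin s, j ≠ j' →
      Disjoint (visited b s n (g.2 j) (pre ++ [(g.1, j)]))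
        (visited b s n (g.2 j') (pre ++ [(g.1, j')])) := by
    intro j j' hjj'
    refine Finset.disjoint_left.mpr fun z hz hz' => hjj' ?_
    have h := List.prefix_of_prefix_length_le (prefix_of_mem_visited hz)
      (prefix_of_mem_visited hz') (by simp)
    simpa using h.eq_of_length (by simp)
  change ∑ z ∈ (Finset.univ.image fun j : Fin (s - 1) => (pre, (g.1, j))) ∪
    Finset.univ.biUnion (fun j : Fin s => visited b s n (g.2 j) (pre ++ [(g.1, j)])), F z = _
  rw [Finset.sum_union hjunction, Finset.sum_image fun _ _ h => by simp_all,
    Finset.sum_biUnion fun j _ j' _ h => hsegments j j' h]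

lemma ham_eq_sum_visited {b s : ℕ} (ω : GIdx b s → ℝ) :
    ∀ n (g : PPath b s n) (pre : List (Fin b × Fin s)),
      ham b s ω n g pre = ∑ z ∈ visited b s n g pre, ω z
  | 0, g, pre => by simp [ham, visited]
  | n + 1, g, pre => by
    rw [sum_visited_succ ω n g pre, ham]
    simp only [ham_eq_sum_visited ω n]

lemma H_eq_sum_visited {b s : ℕ} (ω : GIdx b s → ℝ) (n : ℕ) (g : PPath b s n) :
    H b s ω n g = ∑ z ∈ visited b s n g [], ω z :=
  ham_eq_sum_visited ω n g []

lemma H_apply_eq_sum_visited {Ω : Type*} {b s : ℕ} (ω : GIdx b s → Ω → ℝ) (n : ℕ)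
    (g : PPath b s n) (x : Ω) :
    H b s (fun z => ω z x) n g = (∑ z ∈ visited b s n g [], ω z) x := by
  rw [H_eq_sum_visited, Finset.sum_apply]

lemma card_visited {b s : ℕ} (hs : 1 ≤ s) :
    ∀ n (g : PPath b s n) (pre : List (Fin b × Fin s)), (visited b s n g pre).card = s ^ n - 1
  | 0, g, pre => by simp [visited]
  | n + 1, g, pre => by
    have h := sum_visited_succ (fun _ => 1) n g pre
    simp only [card_visited hs n, Finset.sum_const, Finset.card_univ,
      Fintype.card_fin, smul_eq_mul, mul_one] at h
    rw [h, mul_comm, Nat.sub_one_add_pow_sub_one_mul hs]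

instance instNonemptyPPath (b s : ℕ) [NeZero b] : ∀ n, Nonempty (PPath b s n)
  | 0 => ⟨PUnit.unit⟩
  | n + 1 =>
    have := instNonemptyPPath b s n
    ⟨(0, fun _ => Classical.arbitrary (PPath b s n))⟩

lemma card_ppath_succ (b s n : ℕ) :
    Fintype.card (PPath b s (n + 1)) = b * Fintype.card (PPath b s n) ^ s :=
  calc Fintype.card (PPath b s (n + 1))
      _ = Fintype.card (Fin b × (Fin s → PPath b s n)) := Fintype.card_congr (Equiv.cast rfl)
      _ = _ := by simp only [Fintype.card_prod, Fintype.card_fun, Fintype.card_fin]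

lemma card_ppath_pow (b : ℕ) {s : ℕ} (hs : 1 ≤ s) :
    ∀ n, Fintype.card (PPath b s n) ^ (s - 1) = b ^ (s ^ n - 1)
  | 0 => by simp [show PPath b s 0 = PUnit from rfl]
  | n + 1 => by
    rw [card_ppath_succ, mul_pow, pow_right_comm, card_ppath_pow b hs n, ← pow_mul, ← pow_add,
      Nat.sub_one_add_pow_sub_one_mul hs]

lemma card_ppath_eq_exp {b s : ℕ} (hb : 1 ≤ b) (hs : 2 ≤ s) (n : ℕ) :
    (Fintype.card (PPath b s n) : ℝ) = exp (((s ^ n - 1 : ℕ) : ℝ) * (log b / ((s : ℝ) - 1))) := by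
  have : NeZero b := ⟨by omega⟩
  have hN : (0 : ℝ) < Fintype.card (PPath b s n) := by exact_mod_cast Fintype.card_pos
  have hs1 : (0 : ℝ) < (s : ℝ) - 1 := by
    have : (2 : ℝ) ≤ s := by exact_mod_cast hs
    linarith
  have hlog := congrArg (fun m : ℕ => log m) (card_ppath_pow b (by omega : 1 ≤ s) n)
  simp only [Nat.cast_pow, log_pow, Nat.cast_sub (by omega : 1 ≤ s), Nat.cast_one] at hlog
  rw [← exp_log hN]
  congr 1
  field_simp
  linarith

lemma exp_lam {μ : Measure ℝ} [NeZero μ] {t : ℝ} (ht : Integrable (fun x => exp (t * x)) μ) :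
    exp (lam μ t) = ∫ x, exp (t * x) ∂μ :=
  exp_log (mgf_pos' (X := id) (NeZero.ne μ) ht)

lemma differentiableAt_lam {μ : Measure ℝ}
    (hmgf : ∀ t : ℝ, 0 < t → Integrable (fun x => exp (t * x)) μ) {β : ℝ} (hβ : 0 < β) :
    DifferentiableAt ℝ (lam μ) β :=
  (analyticAt_cgf (X := id)
    (interior_maximal (fun t ht => hmgf t ht) isOpen_Ioi hβ)).differentiableAt

section Environment

variable {Ω : Type*} [MeasurableSpace Ω] {Q : Measure Ω} {μ : Measure ℝ} {b s : ℕ}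
  {ω : GIdx b s → Ω → ℝ} {t : ℝ}

lemma integrable_exp_mul_of_map_eq (hmeas : ∀ z, Measurable (ω z))
    (hdist : ∀ z, Measure.map (ω z) Q = μ) (ht : Integrable (fun x => exp (t * x)) μ)
    (z : GIdx b s) : Integrable (fun x => exp (t * ω z x)) Q := by
  rw [← hdist z] at ht
  exact (integrable_map_measure (by fun_prop) (hmeas z).aemeasurable).mp ht

lemma mgf_eq_exp_lam [NeZero μ] (hmeas : ∀ z, Measurable (ω z))
    (hdist : ∀ z, Measure.map (ω z) Q = μ) (ht : Integrable (fun x => exp (t * x)) μ)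
    (z : GIdx b s) : mgf (ω z) Q t = exp (lam μ t) := by
  rw [exp_lam ht, ← hdist z, mgf, integral_map (hmeas z).aemeasurable (by fun_prop)]

lemma integrable_exp_mul_H [IsFiniteMeasure Q] (hmeas : ∀ z, Measurable (ω z))
    (hindep : iIndepFun ω Q) (hdist : ∀ z, Measure.map (ω z) Q = μ)
    (ht : Integrable (fun x => exp (t * x)) μ) (n : ℕ) (g : PPath b s n) :
    Integrable (fun x => exp (t * H b s (fun z => ω z x) n g)) Q := by
  simp only [H_apply_eq_sum_visited]
  exact hindep.integrable_exp_mul_sum hmeas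
    fun z _ => integrable_exp_mul_of_map_eq hmeas hdist ht z

/-- The `s ^ n - 1` interior vertices of a path carry independent weights. -/
lemma integral_exp_mul_H [NeZero μ] (hs : 1 ≤ s) (hmeas : ∀ z, Measurable (ω z))
    (hindep : iIndepFun ω Q) (hdist : ∀ z, Measure.map (ω z) Q = μ)
    (ht : Integrable (fun x => exp (t * x)) μ) (n : ℕ) (g : PPath b s n) :
    ∫ x, exp (t * H b s (fun z => ω z x) n g) ∂Q = exp (((s ^ n - 1 : ℕ) : ℝ) * lam μ t) := by
  simp only [H_apply_eq_sum_visited]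
  rw [← mgf, hindep.mgf_sum hmeas, Finset.prod_congr rfl fun z _ =>
    mgf_eq_exp_lam hmeas hdist ht z, Finset.prod_const, card_visited hs, ← exp_nat_mul]

lemma integral_Zrv [IsFiniteMeasure Q] [NeZero μ] (hs : 1 ≤ s)
    (hmeas : ∀ z, Measurable (ω z)) (hindep : iIndepFun ω Q)
    (hdist : ∀ z, Measure.map (ω z) Q = μ) (ht : Integrable (fun x => exp (t * x)) μ) (n : ℕ) :
    ∫ x, Zrv ω t n x ∂Q =
      Fintype.card (PPath b s n) * exp (((s ^ n - 1 : ℕ) : ℝ) * lam μ t) := by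
  simp only [Zrv, Z]
  rw [integral_finsetSum _ fun g _ => integrable_exp_mul_H hmeas hindep hdist ht n g]
  simp only [integral_exp_mul_H hs hmeas hindep hdist ht, Finset.sum_const, Finset.card_univ,
    nsmul_eq_mul]

end Environment

section FractionalMoment

variable {Ω : Type*} [MeasurableSpace Ω] {Q : Measure Ω} {μ : Measure ℝ} {b s : ℕ}
  {ω : GIdx b s → Ω → ℝ} {β θ : ℝ}

omit [MeasurableSpace Ω] in
lemma Zrv_nonneg (t : ℝ) (n : ℕ) (x : Ω) : 0 ≤ Zrv ω t n x :=
  Finset.sum_nonneg fun _ _ => (exp_pos _).le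

lemma Wrv_nonneg (t : ℝ) (n : ℕ) (x : Ω) : 0 ≤ Wrv Q ω t n x :=
  div_nonneg (Zrv_nonneg t n x) (integral_nonneg (Zrv_nonneg t n))

lemma measurable_Zrv (hmeas : ∀ z, Measurable (ω z)) (t : ℝ) (n : ℕ) :
    Measurable (Zrv ω t n) := by
  change Measurable fun x => Z b s t n fun z => ω z x
  simp only [Z, H_apply_eq_sum_visited]
  fun_prop

omit [MeasurableSpace Ω] in
/-- Subadditivity of `u ↦ u ^ θ` applied to `Z_n(β) = ∑ exp (β H_n)`. -/
lemma Zrv_rpow_le (hθ0 : 0 < θ) (hθ1 : θ ≤ 1) (n : ℕ) (x : Ω) :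
    Zrv ω β n x ^ θ ≤ Zrv ω (θ * β) n x := by
  refine (rpow_finsetSum_le_sum_rpow _ (fun _ _ => (exp_pos _).le) hθ0 hθ1).trans_eq ?_
  simp only [← exp_mul]
  exact Finset.sum_congr rfl fun _ _ => by ring_nf

lemma integrable_Zrv [IsFiniteMeasure Q] (hmeas : ∀ z, Measurable (ω z))
    (hindep : iIndepFun ω Q) (hdist : ∀ z, Measure.map (ω z) Q = μ) {t : ℝ}
    (ht : Integrable (fun x => exp (t * x)) μ) (n : ℕ) : Integrable (Zrv ω t n) Q :=
  integrable_finsetSum _ fun g _ => integrable_exp_mul_H hmeas hindep hdist ht n g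

lemma integrable_Zrv_rpow [IsFiniteMeasure Q] (hmeas : ∀ z, Measurable (ω z))
    (hindep : iIndepFun ω Q) (hdist : ∀ z, Measure.map (ω z) Q = μ) (hθ0 : 0 < θ) (hθ1 : θ ≤ 1)
    (hθβ : Integrable (fun x => exp (θ * β * x)) μ) (n : ℕ) :
    Integrable (fun x => Zrv ω β n x ^ θ) Q :=
  (integrable_Zrv hmeas hindep hdist hθβ n).mono'
    ((measurable_Zrv hmeas β n).pow_const θ).aestronglyMeasurable
    (.of_forall fun x => by
      rw [norm_of_nonneg (rpow_nonneg (Zrv_nonneg β n x) θ)]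
      exact Zrv_rpow_le hθ0 hθ1 n x)

lemma Wrv_rpow_eq (n : ℕ) (x : Ω) :
    Wrv Q ω β n x ^ θ = Zrv ω β n x ^ θ / (∫ y, Zrv ω β n y ∂Q) ^ θ :=
  div_rpow (Zrv_nonneg β n x) (integral_nonneg (Zrv_nonneg β n)) θ

lemma integrable_Wrv_rpow [IsFiniteMeasure Q] (hmeas : ∀ z, Measurable (ω z))
    (hindep : iIndepFun ω Q) (hdist : ∀ z, Measure.map (ω z) Q = μ) (hθ0 : 0 < θ) (hθ1 : θ ≤ 1)
    (hθβ : Integrable (fun x => exp (θ * β * x)) μ) (n : ℕ) :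
    Integrable (fun x => Wrv Q ω β n x ^ θ) Q := by
  simp only [Wrv_rpow_eq]
  exact (integrable_Zrv_rpow hmeas hindep hdist hθ0 hθ1 hθβ n).div_const _

/-- This is `Q[W_n^θ] ≤ N_n^{1-θ} e^{(s^n-1)(λ(θβ) - θλ(β))}` with the number of paths
`N_n = e^{(s^n-1) log b / (s-1)}`. -/
lemma integral_Wrv_rpow_le [IsFiniteMeasure Q] [NeZero μ] (hb : 1 ≤ b) (hs : 2 ≤ s)
    (hmeas : ∀ z, Measurable (ω z)) (hindep : iIndepFun ω Q)
    (hdist : ∀ z, Measure.map (ω z) Q = μ) (hθ0 : 0 < θ) (hθ1 : θ ≤ 1)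
    (hβ : Integrable (fun x => exp (β * x)) μ) (hθβ : Integrable (fun x => exp (θ * β * x)) μ)
    (n : ℕ) :
    ∫ x, Wrv Q ω β n x ^ θ ∂Q ≤
      exp (((s ^ n - 1 : ℕ) : ℝ) * (fann b s μ (θ * β) - θ * fann b s μ β)) := by
  have hs1 : 1 ≤ s := by omega
  have hZθ : ∫ x, Zrv ω β n x ^ θ ∂Q ≤ ∫ x, Zrv ω (θ * β) n x ∂Q :=
    integral_mono_of_nonneg (.of_forall fun x => rpow_nonneg (Zrv_nonneg β n x) θ)
      (integrable_Zrv hmeas hindep hdist hθβ n) (.of_forall (Zrv_rpow_le hθ0 hθ1 n))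
  simp only [Wrv_rpow_eq, integral_div]
  rw [integral_Zrv hs1 hmeas hindep hdist hθβ, card_ppath_eq_exp hb hs] at hZθ
  rw [integral_Zrv hs1 hmeas hindep hdist hβ, card_ppath_eq_exp hb hs]
  rw [div_le_iff₀ (by positivity)]
  refine hZθ.trans_eq ?_
  rw [← exp_add, ← exp_add, ← exp_mul, ← exp_add, fann, fann]
  ring_nf

end FractionalMoment

/-- `θ ↦ fann (θ β) - θ fann β` vanishes at `θ = 1` with slope `β λ'(β) - fann β`. -/
lemma exists_fann_mul_lt {b s : ℕ} {μ : Measure ℝ} {β : ℝ}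
    (hd : DifferentiableAt ℝ (lam μ) β) (h : fann b s μ β < β * deriv (lam μ) β) :
    ∃ θ ∈ Set.Ioo (0 : ℝ) 1, fann b s μ (θ * β) < θ * fann b s μ β := by
  have hlam : HasDerivAt (fun θ : ℝ => lam μ (θ * β)) (deriv (lam μ) β * β) 1 :=
    hd.hasDerivAt.comp_of_eq 1 (hasDerivAt_mul_const β) (one_mul β).symm
  obtain ⟨θ, hθ, hlt⟩ := ((hlam.add_const (log b / ((s : ℝ) - 1))).sub
    ((hasDerivAt_id 1).mul_const (fann b s μ β))).exists_lt_of_pos (by rw [fann] at h ⊢; linarith)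
    zero_lt_one
  refine ⟨θ, hθ, ?_⟩
  simp only [Pi.sub_apply, id, fann, one_mul] at hlt ⊢
  linarith

theorem statement_8_general
    (b s : ℕ) (hb : 2 ≤ b) (hs : 2 ≤ s)
    {Ω : Type} [MeasurableSpace Ω] (Q : Measure Ω) [IsProbabilityMeasure Q]
    (μ : Measure ℝ) [IsProbabilityMeasure μ]
    (ω : GIdx b s → Ω → ℝ)
    (hmeas : ∀ z, Measurable (ω z))
    (hindep : iIndepFun ω Q)
    (hdist : ∀ z, Measure.map (ω z) Q = μ)
    (hmgf : ∀ β : ℝ, 0 < β → Integrable (fun x => Real.exp (β * x)) μ)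
    (β : ℝ) (hβ : 0 < β)
    (Winf : Ω → ℝ)
    (hW : ∀ᵐ x ∂Q, Tendsto (fun n : ℕ => Wrv Q ω β n x) atTop (𝓝 (Winf x)))
    (hcond : 2 * Real.log b / ((s : ℝ) - 1) < β * deriv (lam μ) β - lam μ β) :
    Winf =ᵐ[Q] 0 := by
  have hs' : (2 : ℝ) ≤ s := by exact_mod_cast hs
  have hL : 0 ≤ Real.log b / ((s : ℝ) - 1) :=
    div_nonneg (log_nonneg (by exact_mod_cast (by omega : 1 ≤ b))) (by linarith)
  obtain ⟨θ, ⟨hθ0, hθ1⟩, hc⟩ := exists_fann_mul_lt (b := b) (s := s)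
    (differentiableAt_lam hmgf hβ)
    (by rw [mul_div_assoc] at hcond; rw [fann]; linarith)
  have hθβ := hmgf (θ * β) (by positivity)
  have hmoment (n : ℕ) : ∫ x, ‖Wrv Q ω β n x ^ θ‖ ∂Q ≤
      exp (fann b s μ (θ * β) - θ * fann b s μ β) ^ n := by
    simp only [norm_of_nonneg (rpow_nonneg (Wrv_nonneg β n _) θ)]
    refine (integral_Wrv_rpow_le (by omega) hs hmeas hindep hdist hθ0 hθ1.le (hmgf β hβ) hθβ
      n).trans (exp_mul_le_exp_pow ?_ (by linarith))
    have := Nat.lt_pow_self (n := n) (by omega : 1 < s)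
    omega
  have hWθ : ∀ᵐ x ∂Q, Tendsto (fun n => Wrv Q ω β n x ^ θ) atTop (𝓝 0) :=
    ae_tendsto_zero_of_summable_integral_norm
      (integrable_Wrv_rpow hmeas hindep hdist hθ0 hθ1.le hθβ)
      (.of_nonneg_of_le (fun n => integral_nonneg fun _ => norm_nonneg _) hmoment
        (summable_geometric_of_lt_one (exp_pos _).le (exp_lt_one_iff.mpr (by linarith))))
  filter_upwards [hW, hWθ] with x hx hx0
  exact tendsto_nhds_unique hx (hx0.of_rpow_nhds_zero (fun n => Wrv_nonneg β n x) hθ0)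

theorem statement_8
    (b s : ℕ) (hb : 2 ≤ b) (hs : 2 ≤ s)
    {Ω : Type} [MeasurableSpace Ω] (Q : Measure Ω) [IsProbabilityMeasure Q]
    (μ : Measure ℝ) [IsProbabilityMeasure μ]
    (ω : GIdx b s → Ω → ℝ)
    (hmeas : ∀ z, Measurable (ω z))
    (hindep : iIndepFun ω Q)
    (hdist : ∀ z, Measure.map (ω z) Q = μ)
    (hmean : (∫ x, x ∂μ) = 0)
    (hvar : (∫ x, x ^ 2 ∂μ) = 1)
    (hmgf : ∀ β : ℝ, 0 < β → Integrable (fun x => Real.exp (β * x)) μ)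
    (β : ℝ) (hβ : 0 < β)
    (Winf : Ω → ℝ)
    (hW : ∀ᵐ x ∂Q, Tendsto (fun n : ℕ => Wrv Q ω β n x) atTop (𝓝 (Winf x)))
    (hcond : 2 * Real.log b / ((s : ℝ) - 1) < β * deriv (lam μ) β - lam μ β) :
    Winf =ᵐ[Q] 0 :=
  statement_8_general b s hb hs Q μ ω hmeas hindep hdist hmgf β hβ Winf hW hcond

end DiamondPolymer
end

section
/- Assume b < s. For every sufficiently small ε > 0 there exists a constant c_ε such that for every 0 < β ≤ 1, if n₀ = n₀(β, ε) denotes the smallest integer n with v_n ≥ ε, then n₀ ≥ 2 |log β| / (log s − log b) − c_ε. -/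
open MeasureTheory ProbabilityTheory Real Filter Topology

namespace DiamondPolymer

/-!
Put `r = s / b > 1`. A second-order bound on the cumulant generating function gives
`(s - 1) γ(β) ≤ G := (s - 1) C β²`, and with `θ = G / (s - b)` the recursion becomes
`v_{n+1} + θ ≤ r e^{G + s v_n} (v_n + θ)`, hence `v_m + θ ≤ r^m e^{m G + s ∑_{k<m} v_k} θ`.
Bernoulli's inequality gives `s v_k ≤ b v_{k+1}`, so up to the first passage time `m` above `ε ≤ 1`
the sum `∑_{k<m} v_k` is bounded and `ε ≤ r^m e^{m G} O(β²)`. Taking logarithms, either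
`m log r ≥ 2 |log β|`, or `m G = O(β² |log β|) = O(1)` and `m log r ≥ 2 |log β| - O(1)`.
-/

lemma exp_sub_one_le_mul_exp (x : ℝ) : exp x - 1 ≤ x * exp x := by
  have h := mul_le_mul_of_nonneg_right (one_sub_le_exp_neg x) (exp_pos x).le
  rw [← exp_add, neg_add_cancel, exp_zero] at h
  linarith

lemma exp_mul_le_one_add_mul_add_sq_mul {a : ℝ} (ha0 : 0 ≤ a) (ha1 : a ≤ 1) (y : ℝ) :
    exp (a * y) ≤ 1 + a * y + a ^ 2 * (y ^ 2 + exp (3 * y)) := by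
  set u := a * y
  have hlow : u ≤ exp u - 1 := by linarith [add_one_le_exp u]
  have hup := exp_sub_one_le_mul_exp u
  rcases le_total 0 y with hy | hy
  · have hu0 : 0 ≤ u := mul_nonneg ha0 hy
    have hexp : exp u ≤ exp y := exp_le_exp.2 (by nlinarith)
    have hy2 : y ^ 2 * exp y ≤ exp (3 * y) := by
      have : y ^ 2 ≤ exp y ^ 2 := pow_le_pow_left₀ hy (by linarith [add_one_le_exp y]) 2
      have h3 : exp (3 * y) = exp y ^ 2 * exp y := by rw [← exp_nat_mul, ← exp_add]; ring_nf
      rw [h3]; exact mul_le_mul_of_nonneg_right this (exp_pos y).le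
    have : u * (exp u - 1) ≤ a ^ 2 * (y ^ 2 * exp y) := by
      calc u * (exp u - 1) ≤ u * (u * exp u) := mul_le_mul_of_nonneg_left hup hu0
        _ = a ^ 2 * (y ^ 2 * exp u) := by ring
        _ ≤ a ^ 2 * (y ^ 2 * exp y) := by gcongr
    nlinarith [sq_nonneg a, sq_nonneg y]
  · have hu0 : u ≤ 0 := mul_nonpos_of_nonneg_of_nonpos ha0 hy
    have : u * (exp u - 1) ≤ u ^ 2 := by nlinarith
    nlinarith [sq_nonneg a, exp_pos (3 * y)]

lemma sq_mul_abs_log_le_one {β : ℝ} (hβ0 : 0 < β) (hβ1 : β ≤ 1) : β ^ 2 * |log β| ≤ 1 := by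
  have h := abs_log_mul_self_lt β hβ0 hβ1
  rw [abs_mul, abs_of_pos hβ0] at h
  nlinarith [abs_nonneg (log β)]

lemma exists_first_passage {u : ℕ → ℝ} {ε : ℝ} (h0 : u 0 < ε) {n : ℕ} (hn : ε ≤ u n) :
    ∃ m, m + 1 ≤ n ∧ u m < ε ∧ ε ≤ u (m + 1) := by
  induction n with
  | zero => exact absurd hn (not_le.2 h0)
  | succ n ih =>
    by_cases h : ε ≤ u n
    · obtain ⟨m, hmn, hm⟩ := ih h
      exact ⟨m, by omega, hm⟩
    · exact ⟨n, le_rfl, not_le.1 h, hn⟩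

section Moments

variable {μ : Measure ℝ}

lemma integrable_sq_of_integral_sq_eq_one (hvar : (∫ x, x ^ 2 ∂μ) = 1) :
    Integrable (fun x : ℝ => x ^ 2) μ := by
  by_contra h
  rw [integral_undef h] at hvar
  exact zero_ne_one hvar

variable [IsProbabilityMeasure μ]

lemma integrable_id_of_integral_sq_eq_one (hvar : (∫ x, x ^ 2 ∂μ) = 1) :
    Integrable (fun x : ℝ => x) μ :=
  ((memLp_two_iff_integrable_sq aestronglyMeasurable_id).2
    (integrable_sq_of_integral_sq_eq_one hvar)).integrable one_le_two

lemma one_le_integral_exp_mul (hmean : (∫ x, x ∂μ) = 0) (hid : Integrable (fun x : ℝ => x) μ)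
    {β : ℝ} (hβ : Integrable (fun x => exp (β * x)) μ) : 1 ≤ ∫ x, exp (β * x) ∂μ := by
  calc (1 : ℝ) = ∫ x, (1 + β * x) ∂μ := by
        rw [integral_add (integrable_const 1) (hid.const_mul β), integral_const_mul, hmean]
        simp
    _ ≤ ∫ x, exp (β * x) ∂μ :=
        integral_mono ((integrable_const 1).add (hid.const_mul β)) hβ
          fun x => by linarith [add_one_le_exp (β * x)]

lemma lam_nonneg (hmean : (∫ x, x ∂μ) = 0) (hid : Integrable (fun x : ℝ => x) μ)
    {β : ℝ} (hβ : Integrable (fun x => exp (β * x)) μ) : 0 ≤ lam μ β :=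
  log_nonneg (one_le_integral_exp_mul hmean hid hβ)

lemma two_mul_lam_le_lam_two_mul {β : ℝ} (hβ : Integrable (fun x => exp (β * x)) μ)
    (h2β : Integrable (fun x => exp (2 * β * x)) μ) : 2 * lam μ β ≤ lam μ (2 * β) := by
  have hsq : (fun x => exp (β * x) ^ 2) = fun x => exp (2 * β * x) := by
    funext x; rw [← exp_nat_mul]; ring_nf
  have hL2 : MemLp (fun x => exp (β * x)) 2 μ :=
    (memLp_two_iff_integrable_sq (by fun_prop)).2 (hsq ▸ h2β)
  have hvar := variance_nonneg (fun x => exp (β * x)) μ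
  rw [variance_eq_sub hL2] at hvar
  have hpos : 0 < ∫ x, exp (β * x) ∂μ := integral_exp_pos hβ
  have hpow : 2 * lam μ β = log ((∫ x, exp (β * x) ∂μ) ^ 2) := by rw [lam, log_pow]; norm_num
  rw [hpow, lam]
  refine log_le_log (by positivity) ?_
  have : (∫ x, ((fun x => exp (β * x)) ^ 2) x ∂μ) = ∫ x, exp (2 * β * x) ∂μ := by
    simp only [Pi.pow_apply]; rw [hsq]
  linarith

lemma lam_two_mul_le (hmean : (∫ x, x ∂μ) = 0) (hvar : (∫ x, x ^ 2 ∂μ) = 1)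
    (h6 : Integrable (fun x => exp (6 * x)) μ) {β : ℝ} (hβ0 : 0 ≤ β) (hβ1 : β ≤ 1)
    (h2β : Integrable (fun x => exp (2 * β * x)) μ) :
    lam μ (2 * β) ≤ (4 + ∫ x, exp (6 * x) ∂μ) * β ^ 2 := by
  have hid := integrable_id_of_integral_sq_eq_one hvar
  have hsq := integrable_sq_of_integral_sq_eq_one hvar
  have hlin : Integrable (fun x : ℝ => 1 + 2 * β * x) μ :=
    (integrable_const 1).add (hid.const_mul (2 * β))
  have hquad : Integrable (fun x => β ^ 2 * (4 * x ^ 2 + exp (6 * x))) μ :=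
    ((hsq.const_mul 4).add h6).const_mul (β ^ 2)
  have hpt : ∀ x, exp (2 * β * x) ≤ 1 + 2 * β * x + β ^ 2 * (4 * x ^ 2 + exp (6 * x)) := by
    intro x
    have h := exp_mul_le_one_add_mul_add_sq_mul hβ0 hβ1 (2 * x)
    ring_nf at h ⊢
    linarith
  have hint : ∫ x, exp (2 * β * x) ∂μ ≤ 1 + (4 + ∫ x, exp (6 * x) ∂μ) * β ^ 2 := by
    refine (integral_mono h2β (hlin.add hquad) hpt).trans_eq ?_
    simp only [Pi.add_apply]
    rw [integral_add hlin hquad, integral_add (integrable_const 1) (hid.const_mul (2 * β)),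
      integral_const_mul, integral_const_mul, integral_add (hsq.const_mul 4) h6,
      integral_const_mul, hmean, hvar]
    simp only [integral_const, probReal_univ, smul_eq_mul]
    ring
  calc lam μ (2 * β) ≤ log (1 + (4 + ∫ x, exp (6 * x) ∂μ) * β ^ 2) :=
        log_le_log (integral_exp_pos h2β) hint
    _ ≤ (4 + ∫ x, exp (6 * x) ∂μ) * β ^ 2 := by
        have : 0 ≤ (4 + ∫ x, exp (6 * x) ∂μ) * β ^ 2 :=
          mul_nonneg (by linarith [integral_exp_pos h6]) (sq_nonneg β)
        linarith [log_le_sub_one_of_pos (by linarith : 0 < 1 + (4 + ∫ x, exp (6 * x) ∂μ) * β ^ 2)]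

end Moments

section Variance

variable {b s : ℕ} {γ : ℝ}

lemma vseq_succ (n : ℕ) :
    vseq b s γ (n + 1) = (exp ((s - 1) * γ) * (vseq b s γ n + 1) ^ s - 1) / b := by
  rw [vseq, one_div_mul_eq_div]

variable (hs : 1 ≤ s) (hγ : 0 ≤ γ)
include hs hγ

lemma one_le_exp_sub_one_mul : 1 ≤ exp ((s - 1) * γ) :=
  one_le_exp (mul_nonneg (by simp [hs]) hγ)

lemma vseq_nonneg (n : ℕ) : 0 ≤ vseq b s γ n := by
  induction n with
  | zero => simp [vseq]
  | succ n ih =>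
    rw [vseq_succ]
    have := one_le_pow₀ (n := s) (by linarith : (1 : ℝ) ≤ vseq b s γ n + 1)
    have := one_le_exp_sub_one_mul hs hγ
    apply div_nonneg _ (Nat.cast_nonneg b)
    nlinarith

lemma mul_vseq_le_mul_vseq_succ (hb : 0 < b) (n : ℕ) :
    s * vseq b s γ n ≤ b * vseq b s γ (n + 1) := by
  have hv := vseq_nonneg (b := b) hs hγ n
  have hber : 1 + s * vseq b s γ n ≤ (vseq b s γ n + 1) ^ s := by
    rw [add_comm _ (1 : ℝ)]; exact one_add_mul_le_pow (by linarith) s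
  have := one_le_exp_sub_one_mul hs hγ
  rw [vseq_succ, mul_div_cancel₀ _ (by positivity)]
  nlinarith [pow_nonneg (by linarith : (0 : ℝ) ≤ vseq b s γ n + 1) s]

lemma sub_mul_sum_range_vseq_le (hb : 0 < b) (n : ℕ) :
    (s - b) * ∑ k ∈ Finset.range (n + 1), vseq b s γ k ≤ s * vseq b s γ n := by
  induction n with
  | zero => simp [vseq]
  | succ n ih =>
    rw [Finset.sum_range_succ]
    linarith [mul_vseq_le_mul_vseq_succ hs hγ hb n]

lemma vseq_succ_le_exp {G : ℝ} (hG : (s - 1) * γ ≤ G) (n : ℕ) :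
    vseq b s γ (n + 1) ≤ (exp (G + s * vseq b s γ n) - 1) / b := by
  have hv := vseq_nonneg (b := b) hs hγ n
  have hpow : (vseq b s γ n + 1) ^ s ≤ exp (s * vseq b s γ n) := by
    rw [exp_nat_mul]
    exact pow_le_pow_left₀ (by linarith) (by linarith [add_one_le_exp (vseq b s γ n)]) s
  rw [vseq_succ, exp_add]
  gcongr

/-- Since `e^x - 1 ≤ x e^x` and `(s e^x - b) θ ≥ (s - b) θ e^x = G e^x` for `θ = G / (s - b)`. -/
lemma vseq_succ_add_le (hb : 0 < b) (hbs : b < s) {G : ℝ} (hG0 : 0 ≤ G)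
    (hG : (s - 1) * γ ≤ G) (n : ℕ) :
    vseq b s γ (n + 1) + G / (s - b) ≤
      s / b * exp (G + s * vseq b s γ n) * (vseq b s γ n + G / (s - b)) := by
  have hb' : (0 : ℝ) < b := by exact_mod_cast hb
  have hsb : (0 : ℝ) < s - b := sub_pos.2 (by exact_mod_cast hbs)
  set v := vseq b s γ n
  set x := G + s * v
  set θ := G / (s - b) with hθ
  have hθ0 : 0 ≤ θ := div_nonneg hG0 hsb.le
  have hθG : (s - b) * θ = G := by rw [hθ]; field_simp
  have hx : 0 ≤ x := by have := vseq_nonneg (b := b) hs hγ n; positivity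
  have hE : 1 ≤ exp x := one_le_exp hx
  have hexp := exp_sub_one_le_mul_exp x
  have hsucc : b * vseq b s γ (n + 1) ≤ G * exp x + s * v * exp x := by
    have := vseq_succ_le_exp (b := b) hs hγ hG n
    rw [le_div_iff₀ hb'] at this
    nlinarith
  rw [div_mul_eq_mul_div, div_mul_eq_mul_div, le_div_iff₀ hb']
  nlinarith [mul_le_mul_of_nonneg_left hE hθ0]

lemma vseq_add_le_pow_mul_exp (hb : 0 < b) (hbs : b < s) {G : ℝ} (hG0 : 0 ≤ G)
    (hG : (s - 1) * γ ≤ G) (n : ℕ) :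
    vseq b s γ n + G / (s - b) ≤
      (s / b) ^ n * exp (n * G + s * ∑ k ∈ Finset.range n, vseq b s γ k) * (G / (s - b)) := by
  induction n with
  | zero => simp [vseq]
  | succ n ih =>
    calc vseq b s γ (n + 1) + G / (s - b)
        ≤ s / b * exp (G + s * vseq b s γ n) * (vseq b s γ n + G / (s - b)) :=
          vseq_succ_add_le hs hγ hb hbs hG0 hG n
      _ ≤ s / b * exp (G + s * vseq b s γ n) * ((s / b) ^ n *
            exp (n * G + s * ∑ k ∈ Finset.range n, vseq b s γ k) * (G / (s - b))) := by
          gcongr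
      _ = _ := by
          have hexp : exp ((n + 1 : ℕ) * G + s * ∑ k ∈ Finset.range (n + 1), vseq b s γ k) =
              exp (G + s * vseq b s γ n) *
                exp (n * G + s * ∑ k ∈ Finset.range n, vseq b s γ k) := by
            rw [← exp_add, Finset.sum_range_succ]; push_cast; ring_nf
          rw [hexp, pow_succ]
          ring

/-- `exp (s ^ 2 / (s - b))` bounds `∏_{k ≤ m} e^{s v_k}`, as `(s - b) ∑_{k ≤ m} v_k ≤ s v_m ≤ s`. -/
lemma vseq_succ_le_of_vseq_le_one (hb : 0 < b) (hbs : b < s) {G : ℝ} (hG0 : 0 ≤ G)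
    (hG : (s - 1) * γ ≤ G) {m : ℕ} (hm : vseq b s γ m ≤ 1) :
    vseq b s γ (m + 1) ≤
      (s / b) ^ (m + 1) * exp ((m + 1 : ℕ) * G) * (exp (s ^ 2 / (s - b)) * (G / (s - b))) := by
  have hsb : (0 : ℝ) < s - b := sub_pos.2 (by exact_mod_cast hbs)
  have hsum : s * ∑ k ∈ Finset.range (m + 1), vseq b s γ k ≤ s ^ 2 / (s - b) := by
    rw [le_div_iff₀ hsb]
    have := sub_mul_sum_range_vseq_le hs hγ hb m
    have hs0 : (0 : ℝ) ≤ s := Nat.cast_nonneg s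
    nlinarith
  have hθ : 0 ≤ G / (s - b) := div_nonneg hG0 hsb.le
  calc vseq b s γ (m + 1)
      ≤ (s / b) ^ (m + 1) * exp ((m + 1 : ℕ) * G +
          s * ∑ k ∈ Finset.range (m + 1), vseq b s γ k) * (G / (s - b)) := by
        linarith [vseq_add_le_pow_mul_exp hs hγ hb hbs hG0 hG (m + 1)]
    _ ≤ (s / b) ^ (m + 1) * exp ((m + 1 : ℕ) * G + s ^ 2 / (s - b)) * (G / (s - b)) := by
        gcongr
    _ = _ := by rw [exp_add]; ring

end Variance

/-- Either `m log r ≥ 2 |log β|` already, or `m K β² ≤ 2 K β² |log β| / log r ≤ 2 K / log r`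
is bounded and the logarithm of the hypothesis gives the bound. -/
lemma exists_le_of_le_pow_mul_exp {r K A ε : ℝ} (hr : 1 < r) (hK : 0 ≤ K) (hA : 0 < A)
    (hε : 0 < ε) : ∃ c : ℝ, ∀ β : ℝ, 0 < β → β ≤ 1 → ∀ m : ℕ,
      ε ≤ r ^ m * exp (m * (K * β ^ 2)) * (A * β ^ 2) → 2 * |log β| / log r - c ≤ m := by
  have hD : 0 < log r := log_pos hr
  set c := (log A - log ε + 2 * K / log r) / log r
  refine ⟨max 0 c, fun β hβ0 hβ1 m hm => ?_⟩
  have hlogβ : log β = -|log β| := by rw [abs_of_nonpos (log_nonpos hβ0.le hβ1), neg_neg]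
  have hlog : log ε ≤ m * log r + m * (K * β ^ 2) + log A - 2 * |log β| := by
    have := log_le_log hε hm
    rw [log_mul (by positivity) (by positivity), log_mul (by positivity) (by positivity),
      log_mul hA.ne' (by positivity), log_pow, log_exp, log_pow, hlogβ] at this
    push_cast at this
    linarith
  by_contra! hlt
  have hm_le : (m : ℝ) ≤ 2 * |log β| / log r := by linarith [le_max_left 0 c]
  have hmK : m * (K * β ^ 2) ≤ 2 * K / log r :=
    calc m * (K * β ^ 2) ≤ 2 * |log β| / log r * (K * β ^ 2) := by gcongr
      _ = 2 * K / log r * (β ^ 2 * |log β|) := by ring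
      _ ≤ 2 * K / log r * 1 := by gcongr; exact sq_mul_abs_log_le_one hβ0 hβ1
      _ = 2 * K / log r := mul_one _
  have : 2 * |log β| / log r - c ≤ m := by
    rw [sub_le_iff_le_add, div_le_iff₀ hD, add_mul, div_mul_cancel₀ _ hD.ne']
    linarith
  linarith [le_max_right 0 c]

theorem statement_17
    (b s : ℕ) (hb : 2 ≤ b) (hs : 2 ≤ s)
    (μ : Measure ℝ) [IsProbabilityMeasure μ]
    (hmean : (∫ x, x ∂μ) = 0)
    (hvar : (∫ x, x ^ 2 ∂μ) = 1)
    (hmgf : ∀ β : ℝ, 0 < β → Integrable (fun x => Real.exp (β * x)) μ)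
    (hbs : b < s)
 :
    ∃ ε₁ : ℝ, 0 < ε₁ ∧ ∀ ε : ℝ, 0 < ε → ε ≤ ε₁ → ∃ c : ℝ,
      ∀ β : ℝ, 0 < β → β ≤ 1 → ∀ n : ℕ,
        ε ≤ vseq b s (lam μ (2 * β) - 2 * lam μ β) n →
        2 * |Real.log β| / (Real.log s - Real.log b) - c ≤ (n : ℝ) := by
  have hb0 : (0 : ℝ) < b := by positivity
  have hbsR : (b : ℝ) < s := by exact_mod_cast hbs
  have hs1 : (1 : ℝ) ≤ s - 1 := by
    rw [le_sub_iff_add_le]; exact_mod_cast hs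
  set C := 4 + ∫ x, exp (6 * x) ∂μ
  have hC : 0 < C := by have := integral_exp_pos (hmgf 6 (by norm_num)); positivity
  refine ⟨1, one_pos, fun ε hε hε1 => ?_⟩
  obtain ⟨c, hc⟩ := exists_le_of_le_pow_mul_exp (K := (s - 1) * C)
    (A := exp (s ^ 2 / (s - b)) * ((s - 1) * C / (s - b))) ((one_lt_div hb0).2 hbsR)
    (by positivity) (by have := sub_pos.2 hbsR; positivity) hε
  refine ⟨c, fun β hβ0 hβ1 n hn => ?_⟩
  set γ := lam μ (2 * β) - 2 * lam μ β
  have hid := integrable_id_of_integral_sq_eq_one hvar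
  have hγ0 : 0 ≤ γ := sub_nonneg.2 <|
    two_mul_lam_le_lam_two_mul (hmgf β hβ0) (hmgf (2 * β) (by positivity))
  have hγ : (s - 1) * γ ≤ (s - 1) * C * β ^ 2 := by
    have := lam_two_mul_le hmean hvar (hmgf 6 (by norm_num)) hβ0.le hβ1
      (hmgf (2 * β) (by positivity))
    have := lam_nonneg hmean hid (hmgf β hβ0)
    rw [mul_assoc]; gcongr; linarith
  obtain ⟨m, hmn, hm, hεm⟩ := exists_first_passage (u := vseq b s γ) (by simpa [vseq]) hn
  have hpass := vseq_succ_le_of_vseq_le_one (by omega) hγ0 (by omega) hbs (by positivity) hγ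
    (hm.le.trans hε1)
  calc 2 * |log β| / (log s - log b) - c = 2 * |log β| / log (s / b) - c := by
        rw [log_div (by positivity) hb0.ne']
    _ ≤ (m + 1 : ℕ) := hc β hβ0 hβ1 (m + 1) (hεm.trans (hpass.trans_eq (by ring)))
    _ ≤ n := by exact_mod_cast hmn

end DiamondPolymer
end
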